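/- For positive integers n, k, and t ∈ [2i/n, (2i+2)/n] with 0 ≤ i ≤ ⌊(n-1)/2⌋, the function Υ_{T(n,nk+1)}(t) = k·Υ_{T(n,n+1)}(t) = k·(-(i+1)i - (1/2)n(n-1-2i)t), where Υ_{T(n,n+1)} is given by the Ozsváth–Stipsicz–Szabó formula. In particular, Υ_{T(n,nk+1)}(t) = -t·k·n(n-1)/2 for t ∈ [0, 2/n]. -/
import Mathlib

/-- counting function of the numerical semigroup ⟨n, nk+1⟩ on `[a,b)`. -/
def Ups.cnt (n k a b : ℕ) : ℕ :=
  ((Finset.Ico a b).filter (fun s => s % n * (n * k + 1) ≤ s)).card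

namespace Ups
variable {n k : ℕ}

theorem mem_iff (hn : 0 < n) (s : ℕ) :
    (∃ m l : ℕ, s = m * n + l * (n * k + 1)) ↔ s % n * (n * k + 1) ≤ s := by
  constructor
  · rintro ⟨m, l, rfl⟩
    have h1 : (m * n + l * (n * k + 1)) % n = l % n := by
      have : m * n + l * (n * k + 1) = l + (m + l * k) * n := by ring
      rw [this, Nat.add_mul_mod_self_right]
    rw [h1]
    calc l % n * (n * k + 1) ≤ l * (n * k + 1) :=
          Nat.mul_le_mul_right _ (Nat.mod_le l n)
      _ ≤ m * n + l * (n * k + 1) := Nat.le_add_left _ _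
  · intro h
    set l := s % n with hl
    have he : s = n * (s / n) + l := (Nat.div_add_mod s n).symm
    set e := s / n with hedef
    have hA : l * (n * k + 1) = l * k * n + l := by ring
    have hB : n * e = e * n := by ring
    have hlk : l * k ≤ e := by
      have h3 : l * k * n ≤ e * n := by omega
      exact Nat.le_of_mul_le_mul_right h3 hn
    refine ⟨e - l * k, l, ?_⟩
    have hsub : (e - l * k) * n = e * n - l * k * n := Nat.sub_mul _ _ _
    have h3 : l * k * n ≤ e * n := Nat.mul_le_mul_right _ hlk
    omega

theorem cnt_split {a b c : ℕ} (hab : a ≤ b) (hbc : b ≤ c) :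
    cnt n k a c = cnt n k a b + cnt n k b c := by
  unfold cnt
  rw [← Finset.card_union_of_disjoint, ← Finset.filter_union,
    Finset.Ico_union_Ico_eq_Ico hab hbc]
  exact Finset.disjoint_filter_filter (Finset.Ico_disjoint_Ico_consecutive a b c)

theorem cnt_block (hn : 0 < n) (hk : 0 < k) (q : ℕ) {a b : ℕ} (hab : a ≤ b) (hb : b ≤ n) :
    cnt n k (q * n + a) (q * n + b) = min b (q / k + 1) - a := by
  unfold cnt
  have himg : Finset.Ico (q * n + a) (q * n + b) =
      (Finset.Ico a b).image (fun l => q * n + l) := by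
    rw [Finset.image_add_left_Ico]
  rw [himg, Finset.filter_image]
  have hfil : (Finset.Ico a b).filter
        (fun l => (q * n + l) % n * (n * k + 1) ≤ q * n + l)
      = (Finset.Ico a b).filter (fun l => l < q / k + 1) := by
    apply Finset.filter_congr
    intro l hl
    simp only [Finset.mem_Ico] at hl
    have hmod : (q * n + l) % n = l := by
      rw [mul_comm q n, Nat.mul_add_mod]
      exact Nat.mod_eq_of_lt (lt_of_lt_of_le hl.2 hb)
    simp only [hmod]
    have hA : l * (n * k + 1) = l * k * n + l := by ring
    constructor
    · intro h
      have h2 : l * k * n ≤ q * n := by omega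
      have h4 : l * k ≤ q := Nat.le_of_mul_le_mul_right h2 hn
      have := (Nat.le_div_iff_mul_le hk).2 h4
      omega
    · intro h
      have h4 : l * k ≤ q := (Nat.le_div_iff_mul_le hk).1 (by omega)
      have h3 : l * k * n ≤ q * n := Nat.mul_le_mul_right _ h4
      omega
  rw [hfil, Finset.card_image_of_injective _ (fun x y h => by omega)]
  rw [Finset.Ico_filter_lt, Nat.card_Ico]



theorem cnt_block0 (hn : 0 < n) (hk : 0 < k) (q : ℕ) {b : ℕ} (hb : b ≤ n) :
    cnt n k (q * n) (q * n + b) = min b (q / k + 1) := by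
  have := cnt_block hn hk q (Nat.zero_le b) hb
  simpa using this

theorem L1 (hn : 0 < n) (hk : 0 < k) {i : ℕ} (hi : i + 1 ≤ n) :
    ∀ d q, k * i ≤ q → (i + 1) * d ≤ n * cnt n k (q * n) (q * n + d) := by
  intro d
  induction d using Nat.strong_induction_on with
  | _ d IH =>
    intro q hq
    have hqk : i ≤ q / k := (Nat.le_div_iff_mul_le hk).2 (by rw [mul_comm]; exact hq)
    rcases le_or_gt d n with hd | hd
    · rw [cnt_block0 hn hk q hd]
      rcases le_total d (q / k + 1) with h | h
      · rw [min_eq_left h]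
        exact Nat.mul_le_mul_right d hi
      · rw [min_eq_right h]
        calc (i + 1) * d ≤ (q / k + 1) * n := Nat.mul_le_mul (by omega) hd
          _ = n * (q / k + 1) := mul_comm _ _
    · have hsplit : cnt n k (q * n) (q * n + d)
          = cnt n k (q * n) (q * n + n) + cnt n k ((q + 1) * n) ((q + 1) * n + (d - n)) := by
        have h1 : q * n + n = (q + 1) * n := by ring
        have h2 : q * n + d = (q + 1) * n + (d - n) := by omega
        rw [h2, ← h1]
        exact cnt_split (by omega) (by omega)
      rw [hsplit]
      have hblk : cnt n k (q * n) (q * n + n) = min n (q / k + 1) := cnt_block0 hn hk q le_rfl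
      have hmin : i + 1 ≤ min n (q / k + 1) := by omega
      have hIH := IH (d - n) (by omega) (q + 1) (by omega)
      have e1 : (i + 1) * (d - n) + (i + 1) * n = (i + 1) * d := by
        rw [← Nat.mul_add]; congr 1; omega
      have e2 : n * (cnt n k (q * n) (q * n + n) + cnt n k ((q + 1) * n) ((q + 1) * n + (d - n)))
          = n * cnt n k (q * n) (q * n + n) + n * cnt n k ((q + 1) * n) ((q + 1) * n + (d - n)) := by
        ring
      have e3 : n * (i + 1) ≤ n * cnt n k (q * n) (q * n + n) := by
        rw [hblk]; exact Nat.mul_le_mul_left n hmin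
      have e4 : n * (i + 1) = (i + 1) * n := mul_comm _ _
      omega

theorem L2 (hn : 0 < n) (hk : 0 < k) {i : ℕ} (hi : i ≤ n) :
    ∀ d q, q ≤ k * i → n * cnt n k (q * n - d) (q * n) ≤ i * d := by
  have key : ∀ c d : ℕ, c ≤ i → d ≤ n → c + n ≤ i + d → n * c ≤ i * d := by
    intro c d h1 h2 h3
    zify at *
    nlinarith [mul_nonneg (by omega : (0:ℤ) ≤ (n : ℤ) - i) (by omega : (0:ℤ) ≤ (n:ℤ) - d)]
  intro d
  induction d using Nat.strong_induction_on with
  | _ d IH =>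
    intro q hq
    rcases Nat.eq_zero_or_pos q with rfl | hq1
    · simp [cnt]
    · have hi1 : 1 ≤ i := by
        by_contra h
        have : i = 0 := by omega
        subst this
        simp at hq; omega
      have hq1k : (q - 1) / k ≤ i - 1 := by
        have : (q - 1) / k < i := by
          rw [Nat.div_lt_iff_lt_mul hk]
          calc q - 1 < q := by omega
            _ ≤ k * i := hq
            _ = i * k := mul_comm _ _
        omega
      have hqn : (q - 1) * n + n = q * n := by
        have h : (q - 1 + 1) * n = (q - 1) * n + n := by ring
        have h2 : q - 1 + 1 = q := by omega
        rw [h2] at h; omega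
      rcases le_or_gt d n with hd | hd
      · -- within top block
        have heq : q * n - d = (q - 1) * n + (n - d) := by omega
        have hblk := cnt_block hn hk (q - 1) (by omega : n - d ≤ n) (le_rfl : n ≤ n)
        have heq2 : (q - 1) * n + n = q * n := hqn
        rw [heq, ← heq2, hblk]
        set c := min n ((q - 1) / k + 1) - (n - d) with hc
        rcases Nat.eq_zero_or_pos c with h0 | hpos
        · rw [h0]; simp
        · have hcle : c ≤ i := by omega
          have hcn : c + n ≤ i + d := by omega
          exact key c d hcle hd hcn
      · -- split off top block
        have hsplit : cnt n k (q * n - d) (q * n)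
            = cnt n k ((q - 1) * n - (d - n)) ((q - 1) * n) + cnt n k ((q - 1) * n) (q * n) := by
          have h2 : q * n - d = (q - 1) * n - (d - n) := by omega
          rw [h2]
          exact cnt_split (by omega) (by omega)
        rw [hsplit]
        have htop : cnt n k ((q - 1) * n) (q * n) = min n ((q - 1) / k + 1) := by
          rw [← hqn]; exact cnt_block0 hn hk (q - 1) le_rfl
        have htople : cnt n k ((q - 1) * n) (q * n) ≤ i := by omega
        have hIH := IH (d - n) (by omega) (q - 1) (by omega)
        have e1 : i * (d - n) + i * n = i * d := by
          rw [← Nat.mul_add]; congr 1; omega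
        have e2 : n * (cnt n k ((q - 1) * n - (d - n)) ((q - 1) * n) + cnt n k ((q - 1) * n) (q * n))
            = n * cnt n k ((q - 1) * n - (d - n)) ((q - 1) * n) + n * cnt n k ((q - 1) * n) (q * n) := by
          ring
        have e3 : n * cnt n k ((q - 1) * n) (q * n) ≤ n * i := Nat.mul_le_mul_left n htople
        have e4 : n * i = i * n := mul_comm _ _
        omega

theorem cnt_chunk (hn : 0 < n) (hk : 0 < k) {i : ℕ} (hi : i + 1 ≤ n) :
    ∀ c, c ≤ k → cnt n k (k * i * n) ((k * i + c) * n) = c * (i + 1) := by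
  intro c
  induction c with
  | zero => intro _; simp [cnt]
  | succ c IH =>
    intro hc
    have hsplit : cnt n k (k * i * n) ((k * i + (c+1)) * n)
        = cnt n k (k * i * n) ((k * i + c) * n) + cnt n k ((k * i + c) * n) ((k * i + c) * n + n) := by
      have h1 : (k * i + (c+1)) * n = (k * i + c) * n + n := by ring
      rw [h1]
      exact cnt_split (by nlinarith) (by omega)
    rw [hsplit, IH (by omega), cnt_block0 hn hk _ le_rfl]
    have hdiv : (k * i + c) / k = i := by
      rw [Nat.mul_add_div hk]
      have : c / k = 0 := Nat.div_eq_of_lt (by omega)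
      omega
    rw [hdiv, min_eq_right (by omega)]
    ring

theorem cnt_zero (hn : 0 < n) (hk : 0 < k) :
    ∀ i, i ≤ n → 2 * cnt n k 0 (k * i * n) = k * (i * (i + 1)) := by
  intro i
  induction i with
  | zero => intro _; simp [cnt]
  | succ i IH =>
    intro hi
    have hsplit : cnt n k 0 (k * (i+1) * n) = cnt n k 0 (k * i * n) + cnt n k (k * i * n) ((k * i + k) * n) := by
      have h1 : k * (i+1) * n = (k * i + k) * n := by ring
      rw [h1]
      exact cnt_split (Nat.zero_le _) (by nlinarith)
    rw [hsplit, cnt_chunk hn hk (by omega) k le_rfl]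
    have hIH := IH (by omega)
    have e : k * ((i+1) * (i + 1 + 1)) = k * (i * (i + 1)) + 2 * (k * (i + 1)) := by ring
    omega

end Ups

/-- `Υ_{T(n,nk+1)} = k · Υ_{T(n,n+1)}`: the semigroup formula for the torus knot
`T(n, nk+1)` evaluates to `k` times the Ozsváth–Stipsicz–Szabó formula for `T(n,n+1)`;
in particular it equals `-t·k·n(n-1)/2` for `t ∈ [0, 2/n]`. -/
theorem upsilon_Tnknplus1 (n k : ℕ) (hn : 0 < n) (hk : 0 < k)
    (S : Set ℕ) (hS : S = {s : ℕ | ∃ m l : ℕ, s = m * n + l * (n * k + 1)})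
    (H : ℤ → ℝ) (hH : ∀ i : ℤ, H i = (Nat.card {s : ℕ // s ∈ S ∧ (s : ℤ) < i} : ℝ))
    (g : ℝ) (hg : g = ((k * (n * (n - 1)) / 2 : ℕ) : ℝ))
    (Υ : ℝ → ℝ)
    (hΥ : ∀ t ∈ Set.Icc (0 : ℝ) 1,
      IsLeast {x : ℝ | ∃ i : ℤ, x = H i + (t / 2) * (g - i)} (-(Υ t) / 2)) :
    (∀ i : ℤ, 0 ≤ i → i ≤ (((n - 1) / 2 : ℕ) : ℤ) →
      ∀ t ∈ Set.Icc (2 * (i : ℝ) / n) ((2 * (i : ℝ) + 2) / n) ∩ Set.Icc (0 : ℝ) 1,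
        Υ t = k * (-((i : ℝ) + 1) * i - (1 / 2) * n * ((n : ℝ) - 1 - 2 * i) * t)) ∧
    (∀ t ∈ Set.Icc (0 : ℝ) (2 / n) ∩ Set.Icc (0 : ℝ) 1,
        Υ t = -t * k * (n * ((n : ℝ) - 1) / 2)) := by
  subst hS
  have hn' : (0:ℝ) < n := by exact_mod_cast hn
  -- H in terms of the counting function
  have hHval : ∀ j : ℤ, H j = (Ups.cnt n k 0 j.toNat : ℝ) := by
    intro j
    rw [hH]
    congr 1
    have hiff : ∀ s : ℕ,
        (s ∈ {s : ℕ | ∃ m l : ℕ, s = m * n + l * (n * k + 1)} ∧ (s : ℤ) < j) ↔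
        s ∈ (Finset.Ico 0 j.toNat).filter (fun s => s % n * (n * k + 1) ≤ s) := by
      intro s
      rw [Finset.mem_filter, Finset.mem_Ico]
      constructor
      · rintro ⟨hs, hlt⟩
        exact ⟨⟨Nat.zero_le _, Int.lt_toNat.2 hlt⟩, (Ups.mem_iff hn s).1 hs⟩
      · rintro ⟨⟨-, hlt⟩, hP⟩
        exact ⟨(Ups.mem_iff hn s).2 hP, Int.lt_toNat.1 hlt⟩
    rw [Nat.card_congr (Equiv.subtypeEquivRight hiff), Nat.card_eq_finsetCard]
    rfl
  -- the genus as a real number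
  have hgval : 2 * g = k * n * ((n:ℝ) - 1) := by
    rw [hg]
    have hev : 2 ∣ k * (n * (n - 1)) := by
      have h1 : n * (n - 1) = (n - 1) * (n - 1 + 1) := by
        have h : n - 1 + 1 = n := by omega
        rw [h]; ring
      have h2 : Even ((n - 1) * (n - 1 + 1)) := Nat.even_mul_succ_self _
      exact Dvd.dvd.mul_left (h1 ▸ h2.two_dvd) k
    have hc := Nat.div_mul_cancel hev
    have h3 : ((k * (n * (n - 1)) / 2 : ℕ) : ℝ) * 2 = (k : ℝ) * ((n : ℝ) * ((n:ℝ) - 1)) := by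
      calc ((k * (n * (n - 1)) / 2 : ℕ) : ℝ) * 2
          = ((k * (n * (n - 1)) / 2 * 2 : ℕ) : ℝ) := by push_cast; ring
        _ = ((k * (n * (n - 1)) : ℕ) : ℝ) := by rw [hc]
        _ = (k : ℝ) * ((n:ℝ) * ((n:ℝ) - 1)) := by
            push_cast [Nat.cast_sub hn]; ring
    linarith
  -- the main computation
  have main : ∀ i : ℕ, 2 * i + 1 ≤ n → ∀ t : ℝ, 2 * i / n ≤ t → t ≤ (2 * i + 2) / n →
      0 ≤ t → t ≤ 1 →
      Υ t = k * (-((i:ℝ) + 1) * i - (1/2) * n * ((n:ℝ) - 1 - 2 * i) * t) := by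
    intro i hi t htl htu ht0 ht1
    have hi1 : i + 1 ≤ n := by omega
    have hin : i ≤ n := by omega
    set jn : ℕ := k * i * n with hjn
    have hc0 := Ups.cnt_zero (n := n) (k := k) hn hk i hin
    set M : ℝ := (Ups.cnt n k 0 jn : ℝ) + t / 2 * (g - jn) with hM
    have hmem : M ∈ {x : ℝ | ∃ j : ℤ, x = H j + (t / 2) * (g - j)} := by
      refine ⟨(jn : ℤ), ?_⟩
      rw [hHval]
      rw [hM]
      norm_num
    have hlb : ∀ j : ℤ, M ≤ H j + t / 2 * (g - j) := by
      intro j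
      rw [hHval j]
      rcases le_or_gt (jn : ℤ) j with hj | hj
      · set d : ℕ := (j - jn).toNat with hd
        have hjt : j.toNat = jn + d := by omega
        have hsplit : Ups.cnt n k 0 j.toNat = Ups.cnt n k 0 jn + Ups.cnt n k jn (jn + d) := by
          rw [hjt]; exact Ups.cnt_split (Nat.zero_le _) (Nat.le_add_right _ _)
        have hL1 := Ups.L1 hn hk hi1 d (k * i) le_rfl
        have h1 : ((i:ℝ) + 1) * d ≤ n * (Ups.cnt n k jn (jn + d) : ℝ) := by
          exact_mod_cast hL1
        have hjd : (j : ℝ) = (jn : ℝ) + d := by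
          have h : (j : ℤ) = (jn : ℤ) + d := by omega
          exact_mod_cast h
        have ht2 : t / 2 ≤ ((i:ℝ) + 1) / n := by
          rw [div_le_div_iff₀ (by norm_num) hn']
          have := (div_le_iff₀ hn').1 (le_refl ((2 * (i:ℝ) + 2) / n))
          have h4 : t * n ≤ 2 * (i:ℝ) + 2 := by
            rw [← le_div_iff₀ hn']; exact htu
          linarith
        have key : t / 2 * d ≤ (Ups.cnt n k jn (jn + d) : ℝ) := by
          have h2 : t / 2 * d ≤ ((i:ℝ) + 1) / n * d :=
            mul_le_mul_of_nonneg_right ht2 (by positivity)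
          have h3 : ((i:ℝ) + 1) / n * d ≤ (Ups.cnt n k jn (jn + d) : ℝ) := by
            rw [div_mul_eq_mul_div, div_le_iff₀ hn']
            calc ((i:ℝ) + 1) * d ≤ n * (Ups.cnt n k jn (jn + d) : ℝ) := h1
              _ = (Ups.cnt n k jn (jn + d) : ℝ) * n := by ring
          linarith
        have hM2 : (Ups.cnt n k 0 j.toNat : ℝ)
            = (Ups.cnt n k 0 jn : ℝ) + (Ups.cnt n k jn (jn + d) : ℝ) := by
          exact_mod_cast hsplit
        rw [hM, hM2, hjd]
        nlinarith [key]
      · have hjt : j.toNat ≤ jn := by omega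
        set d : ℕ := jn - j.toNat with hd
        have hsplit : Ups.cnt n k 0 jn = Ups.cnt n k 0 j.toNat + Ups.cnt n k j.toNat jn :=
          Ups.cnt_split (Nat.zero_le _) hjt
        have hL2 := Ups.L2 hn hk hin d (k * i) le_rfl
        have harg : k * i * n - d = j.toNat := by omega
        rw [harg] at hL2
        have h1 : (n:ℝ) * (Ups.cnt n k j.toNat jn : ℝ) ≤ (i:ℝ) * d := by
          exact_mod_cast hL2
        have hdlej : (d : ℝ) ≤ (jn : ℝ) - j := by
          have h2 : (j : ℤ) ≤ j.toNat := Int.self_le_toNat j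
          have h3 : (d : ℤ) ≤ (jn : ℤ) - j := by omega
          exact_mod_cast h3
        have ht2 : (i:ℝ) / n ≤ t / 2 := by
          rw [div_le_div_iff₀ hn' (by norm_num)]
          have h4 : 2 * (i:ℝ) ≤ t * n := by
            rw [← div_le_iff₀ hn']; exact htl
          linarith
        have key : (Ups.cnt n k j.toNat jn : ℝ) ≤ t / 2 * ((jn:ℝ) - j) := by
          have hcle : (Ups.cnt n k j.toNat jn : ℝ) ≤ (i:ℝ) * d / n := by
            rw [le_div_iff₀ hn']
            calc (Ups.cnt n k j.toNat jn : ℝ) * n = n * (Ups.cnt n k j.toNat jn : ℝ) := by ring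
              _ ≤ (i:ℝ) * d := h1
          have h4 : (i:ℝ) * d / n ≤ (i:ℝ) * ((jn:ℝ) - j) / n := by
            gcongr
          have h5 : (i:ℝ) * ((jn:ℝ) - j) / n ≤ t / 2 * ((jn:ℝ) - j) := by
            have hpos : (0:ℝ) ≤ (jn:ℝ) - j := le_trans (Nat.cast_nonneg d) hdlej
            calc (i:ℝ) * ((jn:ℝ) - j) / n = ((i:ℝ) / n) * ((jn:ℝ) - j) := by ring
              _ ≤ t / 2 * ((jn:ℝ) - j) := mul_le_mul_of_nonneg_right ht2 hpos
          linarith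
        have hM2 : (Ups.cnt n k 0 jn : ℝ)
            = (Ups.cnt n k 0 j.toNat : ℝ) + (Ups.cnt n k j.toNat jn : ℝ) := by
          exact_mod_cast hsplit
        rw [hM, hM2]
        nlinarith [key]
    have hEq := (hΥ t ⟨ht0, ht1⟩).unique ⟨hmem, fun x hx => by obtain ⟨j, rfl⟩ := hx; exact hlb j⟩
    have hc0' : 2 * (Ups.cnt n k 0 jn : ℝ) = (k:ℝ) * ((i:ℝ) * ((i:ℝ) + 1)) := by
      exact_mod_cast hc0
    have hjnr : (jn : ℝ) = (k:ℝ) * (i:ℝ) * n := by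
      rw [hjn]; push_cast; ring
    rw [hM] at hEq
    linear_combination (-2) * hEq - hc0' + t * hjnr - (t/2) * hgval
  constructor
  · rintro i hi0 hile t ⟨⟨htl, htu⟩, ht0, ht1⟩
    lift i to ℕ using hi0 with i'
    have h2i : 2 * i' + 1 ≤ n := by
      have h : i' ≤ (n - 1) / 2 := by exact_mod_cast hile
      omega
    have hres := main i' h2i t (by push_cast at htl ⊢; exact htl)
      (by push_cast at htu ⊢; exact htu) ht0 ht1
    push_cast
    push_cast at hres
    exact hres
  · rintro t ⟨⟨ht0', htu⟩, ht0, ht1⟩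
    have hres := main 0 (by omega) t (by norm_num; exact ht0)
      (by push_cast; norm_num; exact htu) ht0 ht1
    rw [hres]; push_cast; ring
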